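/- arXiv:1703.03983 — 3 statements merged into one kernel-verified Lean document; each statement's English description precedes it below -/
import Mathlib

section
/- Let m and n be positive integers with n dividing m, and let a, b, c, d be integers such that ad - bc ≡ 1 (mod n) and such that the map (x,y) ↦ (ax+by, cx+dy) defines a group automorphism of (ℤ/mℤ) ⊕ (ℤ/nℤ) (where the first coordinate of a pair acts mod m and the second mod n). Then there exists a matrix [[a',b'],[c',d']] in SL(2,ℤ) with a' ≡ a (mod m), b' ≡ b (mod m), c' ≡ c (mod n), and d' ≡ d (mod n). -/
/-!
Surjectivity of the automorphism gives integers `x, y` with `x a + y b ≡ 1 (mod m)`. Shifting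
`(c, d)` by a multiple of `n (-y, x)` keeps it fixed mod `n` and makes the determinant `≡ 1 (mod m)`.
Since no prime divides `a`, `b` and `m`, the first row lifts mod `m` to a coprime pair `(A, B)`, and
a second row of determinant exactly `1` is then found in the residue class of `(c, d)` mod `m`.
-/

theorem Int.exists_isCoprime_add_mul {a b m : ℤ} (ha : a ≠ 0)
    (h : ∀ p : ℤ, p ∣ a → p ∣ b → p ∣ m → IsUnit p) : ∃ k : ℤ, IsCoprime a (b + k * m) := by
  classical
  -- `k` is the product of the primes dividing `a` but not `b`.
  set S : Finset ℕ := {p ∈ a.natAbs.primeFactors | ¬ (p : ℤ) ∣ b}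
  refine ⟨∏ p ∈ S, (p : ℤ), isCoprime_of_prime_dvd (fun h0 ↦ ha h0.1) fun z hz hza hzbK ↦ ?_⟩
  have hz_nat : z.natAbs.Prime := Int.prime_iff_natAbs_prime.mp hz
  by_cases hzb : z ∣ b
  · have hzK : z ∣ ∏ p ∈ S, (p : ℤ) := by
      rcases hz.dvd_mul.mp ((dvd_add_right hzb).mp hzbK) with hzK | hzm
      · exact hzK
      · exact absurd (h z hza hzb hzm) hz.not_isUnit
    obtain ⟨p, hpS, hzp⟩ := hz.exists_mem_finset_dvd hzK
    have hp := Finset.mem_filter.mp hpS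
    have hzp_eq : z.natAbs = p := (Nat.prime_dvd_prime_iff_eq hz_nat
      (Nat.prime_of_mem_primeFactors hp.1)).mp (Int.natAbs_dvd_natAbs.mpr hzp)
    exact hp.2 (hzp_eq ▸ Int.natAbs_dvd.mpr hzb)
  · have hzS : z.natAbs ∈ S := Finset.mem_filter.mpr
      ⟨Nat.mem_primeFactors.mpr ⟨hz_nat, Int.natAbs_dvd_natAbs.mpr hza, Int.natAbs_ne_zero.mpr ha⟩,
        mt Int.natAbs_dvd.mp hzb⟩
    have hzK : z ∣ ∏ p ∈ S, (p : ℤ) := Int.natAbs_dvd.mp (Finset.dvd_prod_of_mem _ hzS)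
    exact hzb ((dvd_add_left (hzK.mul_right m)).mp hzbK)

theorem Int.exists_isCoprime_modEq {a b m x y : ℤ} (hm : m ≠ 0) (h : x * a + y * b ≡ 1 [ZMOD m]) :
    ∃ A B : ℤ, IsCoprime A B ∧ A ≡ a [ZMOD m] ∧ B ≡ b [ZMOD m] := by
  obtain ⟨A, hA0, hA⟩ : ∃ A, A ≠ 0 ∧ A ≡ a [ZMOD m] := by
    rcases eq_or_ne a 0 with rfl | ha
    · exact ⟨m, hm, Int.emod_self.trans (Int.zero_emod m).symm⟩
    · exact ⟨a, ha, rfl⟩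
  have hunit : ∀ p : ℤ, p ∣ A → p ∣ b → p ∣ m → IsUnit p := fun p hpA hpb hpm ↦ by
    have hpa : p ∣ a := (dvd_sub_left hpA).mp (hpm.trans hA.dvd)
    exact isUnit_of_dvd_one ((dvd_sub_left (dvd_add (hpa.mul_left x) (hpb.mul_left y))).mp
      (hpm.trans h.dvd))
  obtain ⟨k, hk⟩ := Int.exists_isCoprime_add_mul hA0 hunit
  exact ⟨A, b + k * m, hk, hA, Int.modEq_iff_dvd.mpr ⟨-k, by ring⟩⟩

theorem Int.exists_det_eq_one_of_isCoprime {A B C D N : ℤ} (hAB : IsCoprime A B)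
    (h : A * D - B * C ≡ 1 [ZMOD N]) :
    ∃ C' D' : ℤ, A * D' - B * C' = 1 ∧ C' ≡ C [ZMOD N] ∧ D' ≡ D [ZMOD N] := by
  obtain ⟨u, v, huv⟩ := hAB
  obtain ⟨f, hf⟩ := h.dvd
  refine ⟨C - N * f * v, D + N * f * u, ?_, Int.modEq_iff_dvd.mpr ⟨f * v, by ring⟩,
    Int.modEq_iff_dvd.mpr ⟨-(f * u), by ring⟩⟩
  linear_combination (-1) * hf + N * f * huv

theorem Int.exists_det_modEq_one {a b c d x y m n : ℤ} (hxy : x * a + y * b ≡ 1 [ZMOD m])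
    (hdet : a * d - b * c ≡ 1 [ZMOD n]) :
    ∃ c₁ d₁ : ℤ, a * d₁ - b * c₁ ≡ 1 [ZMOD m] ∧ c₁ ≡ c [ZMOD n] ∧ d₁ ≡ d [ZMOD n] := by
  obtain ⟨e, he⟩ := hdet.dvd
  obtain ⟨f, hf⟩ := hxy.dvd
  refine ⟨c - n * e * y, d + n * e * x, Int.modEq_iff_dvd.mpr ⟨n * e * f, ?_⟩,
    Int.modEq_iff_dvd.mpr ⟨e * y, by ring⟩, Int.modEq_iff_dvd.mpr ⟨-(e * x), by ring⟩⟩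
  linear_combination he + n * e * hf

theorem ZMod.exists_mul_add_mul_modEq_one_of_surjective {m n : ℕ} {a b : ℤ}
    (φ : ZMod m × ZMod n →+ ZMod m × ZMod n) (hφ : Function.Surjective φ)
    (h₁ : (φ (1, 0)).1 = a) (h₂ : (φ (0, 1)).1 = b) :
    ∃ x y : ℤ, x * a + y * b ≡ 1 [ZMOD m] := by
  obtain ⟨⟨u, v⟩, huv⟩ := hφ (1, 0)
  obtain ⟨x, rfl⟩ := ZMod.intCast_surjective u
  obtain ⟨y, rfl⟩ := ZMod.intCast_surjective v
  have hxy : ((x : ZMod m), (y : ZMod n)) = x • ((1 : ZMod m), (0 : ZMod n)) + y • (0, 1) := by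
    ext <;> simp
  rw [hxy, map_add, map_zsmul, map_zsmul] at huv
  refine ⟨x, y, (ZMod.intCast_eq_intCast_iff _ _ _).mp ?_⟩
  simpa [h₁, h₂] using congrArg Prod.fst huv

theorem stmt0_general (m n : ℕ) (hm : 0 < m) (hnm : n ∣ m)
    (a b c d : ℤ) (hdet : a * d - b * c ≡ 1 [ZMOD n])
    (φ : (ZMod m × ZMod n) ≃+ (ZMod m × ZMod n))
    (hφ1 : φ (1, 0) = ((a : ZMod m), (c : ZMod n)))
    (hφ2 : φ (0, 1) = ((b : ZMod m), (d : ZMod n))) :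
    ∃ a' b' c' d' : ℤ, a' * d' - b' * c' = 1 ∧
      a' ≡ a [ZMOD m] ∧ b' ≡ b [ZMOD m] ∧ c' ≡ c [ZMOD n] ∧ d' ≡ d [ZMOD n] := by
  obtain ⟨x, y, hxy⟩ := ZMod.exists_mul_add_mul_modEq_one_of_surjective (a := a) (b := b)
    φ.toAddMonoidHom φ.surjective (by simp [hφ1]) (by simp [hφ2])
  obtain ⟨c₁, d₁, hdet₁, hc₁, hd₁⟩ := Int.exists_det_modEq_one hxy hdet
  obtain ⟨A, B, hAB, hA, hB⟩ := Int.exists_isCoprime_modEq (by exact_mod_cast hm.ne') hxy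
  obtain ⟨C, D, hABCD, hC, hD⟩ := Int.exists_det_eq_one_of_isCoprime hAB
    (((hA.mul_right d₁).sub (hB.mul_right c₁)).trans hdet₁)
  have hnm' : (n : ℤ) ∣ m := Int.natCast_dvd_natCast.mpr hnm
  exact ⟨A, B, C, D, hABCD, hA, hB, (hC.of_dvd hnm').trans hc₁, (hD.of_dvd hnm').trans hd₁⟩

/-- Lifting a special automorphism of `(ℤ/mℤ) ⊕ (ℤ/nℤ)` to a matrix in `SL(2,ℤ)`
satisfying the stated congruences. -/
theorem stmt0 (m n : ℕ) (hm : 0 < m) (hn : 0 < n) (hnm : n ∣ m)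
    (a b c d : ℤ) (hdet : a * d - b * c ≡ 1 [ZMOD n])
    (φ : (ZMod m × ZMod n) ≃+ (ZMod m × ZMod n))
    (hφ1 : φ (1, 0) = ((a : ZMod m), (c : ZMod n)))
    (hφ2 : φ (0, 1) = ((b : ZMod m), (d : ZMod n))) :
    ∃ a' b' c' d' : ℤ, a' * d' - b' * c' = 1 ∧
      a' ≡ a [ZMOD m] ∧ b' ≡ b [ZMOD m] ∧ c' ≡ c [ZMOD n] ∧ d' ≡ d [ZMOD n] :=
  stmt0_general m n hm hnm a b c d hdet φ hφ1 hφ2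
end

section
/- Let m and n be positive integers with n | m, and let φ be an automorphism of A = (ℤ/mℤ) ⊕ (ℤ/nℤ) with φ(1,0) = a·(1,0) + c·(0,1) and φ(0,1) = b·(1,0) + d·(0,1) for integers a,b,c,d. If p is a prime dividing both a and b, then p does not divide m. -/
theorem ZMod.prod_addMonoidHom_ext {m n : ℕ} {G : Type*} [AddGroup G]
    {f g : ZMod m × ZMod n →+ G} (h₁ : f (1, 0) = g (1, 0)) (h₂ : f (0, 1) = g (0, 1)) :
    f = g := by
  ext ⟨x, y⟩
  obtain ⟨k, rfl⟩ := ZMod.intCast_surjective x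
  obtain ⟨l, rfl⟩ := ZMod.intCast_surjective y
  have hkl : ((k : ZMod m), (l : ZMod n)) = k • ((1 : ZMod m), (0 : ZMod n)) + l • (0, 1) := by
    ext <;> simp
  simp only [hkl, map_add, map_zsmul, h₁, h₂]

theorem stmt1_general (m n : ℕ)
    (a b c d : ℤ)
    (φ : (ZMod m × ZMod n) ≃+ (ZMod m × ZMod n))
    (hφ1 : φ (1, 0) = ((a : ZMod m), (c : ZMod n)))
    (hφ2 : φ (0, 1) = ((b : ZMod m), (d : ZMod n)))
    (p : ℕ) (hp : p.Prime) (hpa : (p : ℤ) ∣ a) (hpb : (p : ℤ) ∣ b) :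
    ¬ (p ∣ m) := by
  intro hpm
  have : Fact p.Prime := ⟨hp⟩
  -- the first coordinate of `φ`, reduced mod `p`, kills both generators but hits `1`
  let ψ : ZMod m × ZMod n →+ ZMod p :=
    ((ZMod.castHom hpm (ZMod p)).toAddMonoidHom.comp (AddMonoidHom.fst _ _)).comp φ.toAddMonoidHom
  have hψ : ψ = 0 := ZMod.prod_addMonoidHom_ext
    (by simpa [ψ, hφ1, ZMod.cast_intCast hpm, ZMod.intCast_zmod_eq_zero_iff_dvd] using hpa)
    (by simpa [ψ, hφ2, ZMod.cast_intCast hpm, ZMod.intCast_zmod_eq_zero_iff_dvd] using hpb)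
  have hψ₁ : ψ (φ.symm (1, 0)) = 1 := by simp [ψ, ZMod.cast_one hpm]
  exact one_ne_zero (hψ₁.symm.trans (DFunLike.congr_fun hψ _))

/-- If `φ` is an automorphism of `(ℤ/mℤ) ⊕ (ℤ/nℤ)` with `φ(1,0) = a(1,0)+c(0,1)` and
`φ(0,1) = b(1,0)+d(0,1)`, and a prime `p` divides both `a` and `b`, then `p ∤ m`. -/
theorem stmt1 (m n : ℕ) (hm : 0 < m) (hn : 0 < n) (hnm : n ∣ m)
    (a b c d : ℤ)
    (φ : (ZMod m × ZMod n) ≃+ (ZMod m × ZMod n))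
    (hφ1 : φ (1, 0) = ((a : ZMod m), (c : ZMod n)))
    (hφ2 : φ (0, 1) = ((b : ZMod m), (d : ZMod n)))
    (p : ℕ) (hp : p.Prime) (hpa : (p : ℤ) ∣ a) (hpb : (p : ℤ) ∣ b) :
    ¬ (p ∣ m) :=
  stmt1_general m n a b c d φ hφ1 hφ2 p hp hpa hpb
end

section
/- Let G be a group, H ≤ G a subgroup, and suppose a set S carries commuting left and right G-actions such that there is an element s₀ ∈ S with: the left stabilizer of the right orbit s₀·G is contained in finitely many left H-cosets (indeed [G : H] < ∞), and for every h ∈ H there exists g ∈ G with h·s₀ = s₀·g. Then the set of right G-orbits in G·s₀·G is finite, of cardinality at most [G : H]. -/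
/-!
Write `g = ψ * h` with `ψ` the chosen representative of the coset `gH` and `h ∈ H`.
Since the two actions commute, `h · (s₀ · g') = (h · s₀) · g'`, and the lifting property
turns `h · s₀` into `s₀ · k`; hence `g · s₀ · g'` lies in the right orbit of `ψ · s₀`,
and there are only `[G : H]` such representatives `ψ`.
-/

section Biset

variable {G S : Type*} [Group G] {l r : G → S → S}

theorem exists_left_right_eq_right_of_mem
    (hrm : ∀ g g' s, r (g * g') s = r g' (r g s))
    (hcomm : ∀ g h s, l g (r h s) = r h (l g s))
    {H : Subgroup G} {s₀ : S} (hlift : ∀ h ∈ H, ∃ g : G, l h s₀ = r g s₀)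
    {h : G} (hh : h ∈ H) (g' : G) :
    ∃ k : G, l h (r g' s₀) = r k s₀ := by
  obtain ⟨k, hk⟩ := hlift h hh
  exact ⟨k * g', by rw [hcomm, hk, hrm]⟩

theorem exists_left_right_eq_right_left_out
    (hlm : ∀ g g' s, l (g * g') s = l g (l g' s))
    (hrm : ∀ g g' s, r (g * g') s = r g' (r g s))
    (hcomm : ∀ g h s, l g (r h s) = r h (l g s))
    {H : Subgroup G} {s₀ : S} (hlift : ∀ h ∈ H, ∃ g : G, l h s₀ = r g s₀) (g g' : G) :
    ∃ k : G, l g (r g' s₀) = r k (l (g : G ⧸ H).out s₀) := by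
  obtain ⟨h, hout⟩ := QuotientGroup.mk_out_eq_mul H g
  have hg : g = (g : G ⧸ H).out * (h : G)⁻¹ := by rw [hout]; group
  obtain ⟨k, hk⟩ :=
    exists_left_right_eq_right_of_mem hrm hcomm hlift (H.inv_mem h.2) g'
  exact ⟨k, by nth_rewrite 1 [hg]; rw [hlm, hk, hcomm]⟩

end Biset

theorem stmt17_general {G : Type*} [Group G] {S : Type*}
    (l r : G → S → S)
    (hlm : ∀ g g' s, l (g * g') s = l g (l g' s))
    (hrm : ∀ g g' s, r (g * g') s = r g' (r g s))
    (hcomm : ∀ g h s, l g (r h s) = r h (l g s))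
    (H : Subgroup G) (hHfin : H.FiniteIndex)
    (s₀ : S)
    (hlift : ∀ h ∈ H, ∃ g : G, l h s₀ = r g s₀) :
    ∃ T : Finset S, T.card ≤ H.index ∧
      ∀ g g' : G, ∃ t ∈ T, ∃ k : G, l g (r g' s₀) = r k t := by
  classical
  have : Fintype (G ⧸ H) := Fintype.ofFinite _
  refine ⟨Finset.univ.image (fun q : G ⧸ H => l q.out s₀), ?_, fun g g' => ?_⟩
  · calc _ ≤ Fintype.card (G ⧸ H) := Finset.card_image_le
      _ = H.index := by rw [H.index_eq_card, Nat.card_eq_fintype_card]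
  · obtain ⟨k, hk⟩ := exists_left_right_eq_right_left_out hlm hrm hcomm hlift g g'
    exact ⟨_, Finset.mem_image_of_mem _ (Finset.mem_univ _), k, hk⟩

/-- Abstract form of finiteness of right orbits in a biset: if `H ≤ G` has finite index,
`S` carries commuting left and right `G`-actions, and every `h ∈ H` satisfies
`h·s₀ = s₀·g` for some `g`, then the right `G`-orbits in `G·s₀·G` are covered by at most
`[G : H]` orbit representatives. -/
theorem stmt17 {G : Type*} [Group G] {S : Type*}
    (l r : G → S → S)
    (hl1 : ∀ s, l 1 s = s) (hlm : ∀ g g' s, l (g * g') s = l g (l g' s))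
    (hr1 : ∀ s, r 1 s = s) (hrm : ∀ g g' s, r (g * g') s = r g' (r g s))
    (hcomm : ∀ g h s, l g (r h s) = r h (l g s))
    (H : Subgroup G) (hHfin : H.FiniteIndex)
    (s₀ : S)
    (hlift : ∀ h ∈ H, ∃ g : G, l h s₀ = r g s₀) :
    ∃ T : Finset S, T.card ≤ H.index ∧
      ∀ g g' : G, ∃ t ∈ T, ∃ k : G, l g (r g' s₀) = r k t :=
  stmt17_general l r hlm hrm hcomm H hHfin s₀ hlift
end
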